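/- Let G be a connected noncomplete graph on exactly 5 vertices such that d(x) + d(y) ≥ 3 for every pair of nonadjacent vertices x, y. Then G has a Hamiltonian path, and consequently pc(G) = 2. -/

import Mathlib

open SimpleGraph

/-- An edge-coloring `c` with `k` colors is a *proper connection coloring* of `G`
if every pair of vertices is joined by a path whose consecutive edges have distinct colors. -/
def ProperConnColoring {V : Type*} (G : SimpleGraph V) {k : ℕ} (c : Sym2 V → Fin k) : Prop :=
  ∀ u v : V, ∃ p : G.Walk u v, p.IsPath ∧ (p.edges.map c).Chain' (· ≠ ·)

/-- The proper connection number of `G`. -/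
noncomputable def pc {V : Type*} (G : SimpleGraph V) : ℕ :=
  sInf {k | ∃ c : Sym2 V → Fin k, ProperConnColoring G c}

/-!
Take a longest path `P`. The neighbours of its ends lie on `P`; if the ends are adjacent, every
vertex of `P` is an end of a rotated longest path, so by connectivity `P` covers the graph.
Otherwise `d(x) + d(y) ≥ 3` for the two ends rules out `P` on three vertices and, for
`P = a b c d`, forces a chord `ac` or `bd`. Both chords close the cycle `a c d b`; a single one
leaves the fifth vertex and an end of `P` pendant at the same vertex, again violating the degree
condition. Colouring the edges of a Hamiltonian path alternately gives `pc(G) ≤ 2`, and a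
nonadjacent pair needs two colours.
-/

namespace SimpleGraph

variable {V : Type*} {G : SimpleGraph V}

theorem Preconnected.mem_of_forall_adj_mem (hG : G.Preconnected) {S : Set V}
    (hS : ∀ x y, x ∈ S → G.Adj x y → y ∈ S) {u : V} (hu : u ∈ S) (v : V) : v ∈ S := by
  by_contra hv
  obtain ⟨d, -, hd, hd'⟩ := (hG u v).some.exists_boundary_dart S hu hv
  exact hd' (hS _ _ hd d.adj)

theorem degree_le_card_of_forall_adj_mem [Fintype V] [DecidableRel G.Adj] {x : V}
    {s : Finset V} (h : ∀ y, G.Adj x y → y ∈ s) : G.degree x ≤ s.card :=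
  Finset.card_le_card fun y hy => h y ((mem_neighborFinset _ _ _).1 hy)

/-- Paths are handled as vertex lists, so that short ones can be written as list literals. -/
def IsPathList (G : SimpleGraph V) (l : List V) : Prop := l.IsChain G.Adj ∧ l.Nodup

def IsLongestPathList (G : SimpleGraph V) (l : List V) : Prop :=
  G.IsPathList l ∧ ∀ l', G.IsPathList l' → l'.length ≤ l.length

theorem IsPathList.reverse {l : List V} (hl : G.IsPathList l) : G.IsPathList l.reverse :=
  ⟨List.isChain_reverse.2 (hl.1.imp fun _ _ h => h.symm), List.nodup_reverse.2 hl.2⟩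

theorem IsLongestPathList.of_length_le {l l' : List V} (hl : G.IsLongestPathList l)
    (hl' : G.IsPathList l') (hlen : l.length ≤ l'.length) : G.IsLongestPathList l' :=
  ⟨hl', fun l'' h => (hl.2 l'' h).trans hlen⟩

theorem IsLongestPathList.reverse {l : List V} (hl : G.IsLongestPathList l) :
    G.IsLongestPathList l.reverse :=
  hl.of_length_le hl.1.reverse (List.length_reverse ▸ le_rfl)

theorem exists_isLongestPathList [Fintype V] (G : SimpleGraph V) :
    ∃ l, G.IsLongestPathList l := by
  classical
  let P n := ∃ l, G.IsPathList l ∧ l.length = n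
  obtain ⟨l, hl, hlen⟩ : P (Nat.findGreatest P (Fintype.card V)) :=
    Nat.findGreatest_spec (Nat.zero_le _) ⟨[], by simp [IsPathList]⟩
  exact ⟨l, hl, fun l' hl' =>
    hlen ▸ Nat.le_findGreatest hl'.2.length_le_card ⟨l', hl', rfl⟩⟩

theorem IsLongestPathList.mem_of_adj_head {a x : V} {t : List V}
    (hl : G.IsLongestPathList (a :: t)) (hx : G.Adj a x) : x ∈ a :: t := by
  by_contra hxl
  have : G.IsPathList (x :: a :: t) :=
    ⟨List.isChain_cons_cons.2 ⟨hx.symm, hl.1.1⟩, List.nodup_cons.2 ⟨hxl, hl.1.2⟩⟩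
  simpa using hl.2 _ this

/-- `hclose` is stated with `t.getLast?` so that it holds vacuously for a one-vertex path. -/
theorem IsLongestPathList.exists_cons_perm_of_mem {a x : V} {t : List V}
    (hl : G.IsLongestPathList (a :: t)) (hclose : ∀ z ∈ t.getLast?, G.Adj z a)
    (hx : x ∈ a :: t) :
    ∃ r, G.IsLongestPathList (x :: r) ∧ (x :: r).Perm (a :: t) := by
  obtain ⟨s, r, hsr⟩ := List.append_of_mem hx
  rcases s with _ | ⟨a', s⟩
  · simp only [List.nil_append, List.cons.injEq] at hsr
    obtain ⟨rfl, rfl⟩ := hsr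
    exact ⟨t, hl, .refl _⟩
  · simp only [List.cons_append, List.cons.injEq] at hsr
    obtain ⟨rfl, rfl⟩ := hsr
    have hperm : (x :: r ++ a :: s).Perm (a :: (s ++ x :: r)) := List.perm_append_comm
    have hchain : (a :: s ++ x :: r).IsChain G.Adj := hl.1.1
    refine ⟨r ++ a :: s, ?_, hperm⟩
    refine hl.of_length_le ⟨?_, hperm.nodup_iff.2 hl.1.2⟩ hperm.length_eq.ge
    rw [← List.cons_append, List.isChain_append]
    refine ⟨hchain.right_of_append, hchain.left_of_append, fun z hz y hy => ?_⟩
    simp only [List.head?_cons, Option.mem_def, Option.some.injEq] at hy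
    subst hy
    exact hclose z (List.mem_getLast?_append_of_mem_getLast? hz)

theorem IsLongestPathList.forall_mem_of_adj_getLast_head (hG : G.Preconnected) {a : V}
    {t : List V} (hl : G.IsLongestPathList (a :: t)) (hclose : ∀ z ∈ t.getLast?, G.Adj z a)
    (v : V) : v ∈ a :: t := by
  refine hG.mem_of_forall_adj_mem (S := {v | v ∈ a :: t}) (fun x y hx hxy => ?_)
    (List.mem_cons_self (a := a)) v
  obtain ⟨r, hr, hperm⟩ := hl.exists_cons_perm_of_mem hclose hx
  exact hperm.subset (hr.mem_of_adj_head hxy)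

theorem IsLongestPathList.not_adj_head {x w : V} {t : List V}
    (hl : G.IsLongestPathList (x :: t)) (hw : w ∉ x :: t) : ¬ G.Adj x w :=
  fun h => hw (hl.mem_of_adj_head h)

theorem IsLongestPathList.degree_head_le [Fintype V] [DecidableRel G.Adj] {a : V} {t : List V}
    (hl : G.IsLongestPathList (a :: t)) {s : Finset V} (hs : ∀ y ∈ t, G.Adj a y → y ∈ s) :
    G.degree a ≤ s.card :=
  degree_le_card_of_forall_adj_mem fun y hy =>
    hs y ((List.mem_cons.1 (hl.mem_of_adj_head hy)).resolve_left (G.ne_of_adj hy).symm) hy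

section DegreeSum

variable [Fintype V] [DecidableRel G.Adj]

theorem IsLongestPathList.adj_of_three
    (hdeg : ∀ x y : V, x ≠ y → ¬ G.Adj x y → 3 ≤ G.degree x + G.degree y) {a b c : V}
    (hl : G.IsLongestPathList [a, b, c]) : G.Adj c a := by
  by_contra hca
  have hac : a ≠ c := fun h => (List.nodup_cons.1 hl.1.2).1 (by simp [h])
  have ha := hl.degree_head_le (s := {b}) (by simpa using fun h => (hca h.symm).elim)
  have hc := hl.reverse.degree_head_le (s := {b}) (by simpa using fun h => (hca h).elim)
  have := hdeg a c hac (fun h => hca h.symm)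
  simp only [Finset.card_singleton] at ha hc
  omega

theorem IsLongestPathList.adj_of_four_of_adj
    (hdeg : ∀ x y : V, x ≠ y → ¬ G.Adj x y → 3 ≤ G.degree x + G.degree y) {a b c d w : V}
    (hl : G.IsLongestPathList [a, b, c, d]) (hw : w ∉ [a, b, c, d])
    (hcover : ∀ v, v = w ∨ v ∈ [a, b, c, d]) (hac : G.Adj a c) (hda : ¬ G.Adj d a) :
    G.Adj d b := by
  by_contra hdb
  obtain ⟨hab, -, hcd⟩ : G.Adj a b ∧ G.Adj b c ∧ G.Adj c d := by
    simpa only [List.isChain_cons_cons, List.isChain_singleton, and_true] using hl.1.1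
  have hl' : G.IsLongestPathList [b, a, c, d] :=
    hl.of_length_le
      ⟨by simp [hab.symm, hac, hcd], (List.Perm.swap a b [c, d]).nodup_iff.2 hl.1.2⟩ le_rfl
  have hwa := hl.not_adj_head hw
  have hwb := hl'.not_adj_head (by simpa [or_left_comm] using hw)
  have hwd := hl.reverse.not_adj_head (by simpa [or_comm, or_left_comm] using hw)
  have hw_nbr : ∀ y, G.Adj w y → y ∈ ({c} : Finset V) := by
    intro y hy
    rcases hcover y with rfl | hy'
    · exact (G.ne_of_adj hy rfl).elim
    · simp only [List.mem_cons, List.not_mem_nil, or_false] at hy'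
      rcases hy' with rfl | rfl | rfl | rfl
      exacts [(hwa hy.symm).elim, (hwb hy.symm).elim, Finset.mem_singleton_self _,
        (hwd hy.symm).elim]
  have hd := hl.reverse.degree_head_le (s := {c})
    (by simpa using ⟨fun h => (hdb h).elim, fun h => (hda h).elim⟩)
  have hw1 := degree_le_card_of_forall_adj_mem hw_nbr
  have := hdeg w d (by rintro rfl; simp at hw) (fun h => hwd h.symm)
  simp only [Finset.card_singleton] at hw1 hd
  omega

theorem IsLongestPathList.adj_of_four (hG : G.Preconnected)
    (hdeg : ∀ x y : V, x ≠ y → ¬ G.Adj x y → 3 ≤ G.degree x + G.degree y) {a b c d w : V}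
    (hl : G.IsLongestPathList [a, b, c, d]) (hw : w ∉ [a, b, c, d])
    (hcover : ∀ v, v = w ∨ v ∈ [a, b, c, d]) : G.Adj d a := by
  by_contra hda
  have hchord : G.Adj a c ∨ G.Adj d b := by
    by_contra! h
    have ha := hl.degree_head_le (s := {b})
      (by simpa using ⟨fun h' => (h.1 h').elim, fun h' => (hda h'.symm).elim⟩)
    have hd := hl.reverse.degree_head_le (s := {c})
      (by simpa using ⟨fun h' => (h.2 h').elim, fun h' => (hda h').elim⟩)
    have hne : a ≠ d := fun h => (List.nodup_cons.1 hl.1.2).1 (by simp [h])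
    have := hdeg a d hne (fun h => hda h.symm)
    simp only [Finset.card_singleton] at ha hd
    omega
  have hw' : w ∉ [d, c, b, a] := by simpa [or_comm, or_left_comm] using hw
  have hcover' (v : V) : v = w ∨ v ∈ [d, c, b, a] := by
    simpa [or_comm, or_left_comm] using hcover v
  obtain ⟨hac, hdb⟩ : G.Adj a c ∧ G.Adj d b := hchord.elim
    (fun hac => ⟨hac, hl.adj_of_four_of_adj hdeg hw hcover hac hda⟩)
    (fun hdb => ⟨hl.reverse.adj_of_four_of_adj hdeg hw' hcover' hdb (hda ·.symm), hdb⟩)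
  obtain ⟨hab, -, hcd⟩ : G.Adj a b ∧ G.Adj b c ∧ G.Adj c d := by
    simpa only [List.isChain_cons_cons, List.isChain_singleton, and_true] using hl.1.1
  have hperm : [a, c, d, b].Perm [a, b, c, d] := .cons a (List.perm_append_comm (l₁ := [c, d]))
  have hcycle : G.IsLongestPathList [a, c, d, b] :=
    hl.of_length_le ⟨by simp [hac, hcd, hdb], hperm.nodup_iff.2 hl.1.2⟩ le_rfl
  exact hw (hperm.subset (hcycle.forall_mem_of_adj_getLast_head hG (by simpa using hab.symm) w))

theorem IsLongestPathList.mem_of_card_eq_five (hG : G.Preconnected) (hn : Fintype.card V = 5)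
    (hdeg : ∀ x y : V, x ≠ y → ¬ G.Adj x y → 3 ≤ G.degree x + G.degree y) {l : List V}
    (hl : G.IsLongestPathList l) (w : V) : w ∈ l := by
  classical
  by_contra hw
  have hwl : (w :: l).Nodup := List.nodup_cons.2 ⟨hw, hl.1.2⟩
  have hlen : l.length < 5 := by simpa [hn] using hwl.length_le_card
  have hcover (h4 : l.length = 4) (v : V) : v = w ∨ v ∈ l := by
    have huniv : (w :: l).toFinset = Finset.univ := Finset.eq_univ_of_card _ <| by
      rw [List.toFinset_card_of_nodup hwl, hn, List.length_cons, h4]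
    simpa using (huniv.symm ▸ Finset.mem_univ v : v ∈ (w :: l).toFinset)
  rcases l with _ | ⟨a, t⟩
  · simpa using hl.2 [w] ⟨List.isChain_singleton w, List.nodup_singleton w⟩
  refine hw (hl.forall_mem_of_adj_getLast_head hG ?_ w)
  rcases t with _ | ⟨b, _ | ⟨c, _ | ⟨d, _ | ⟨e, t⟩⟩⟩⟩
  · simp
  · simpa using (List.isChain_cons_cons.1 hl.1.1).1.symm
  · simpa using hl.adj_of_three hdeg
  · simpa using hl.adj_of_four hG hdeg hw (hcover rfl)
  · simp only [List.length_cons] at hlen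
    omega

end DegreeSum

theorem IsPathList.isHamiltonian_ofSupport [DecidableEq V] {l : List V} (hl : G.IsPathList l)
    (hne : l ≠ []) (hall : ∀ v, v ∈ l) : (Walk.ofSupport l hne hl.1).IsHamiltonian :=
  ((Walk.isPath_def _).2 (by rw [Walk.support_ofSupport]; exact hl.2)).isHamiltonian_of_mem
    (by simpa using hall)

theorem Walk.IsPath.exists_isPath_isSubwalk {u v x y : V} {p : G.Walk u v} (hp : p.IsPath)
    (hx : x ∈ p.support) (hy : y ∈ p.support) :
    ∃ q : G.Walk x y, q.IsPath ∧ (q.IsSubwalk p ∨ q.reverse.IsSubwalk p) := by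
  classical
  by_cases hxy : y ∈ (p.dropUntil x hx).support
  · exact ⟨_, (hp.dropUntil hx).takeUntil hxy,
      .inl ((Walk.isSubwalk_takeUntil _ _).trans (Walk.isSubwalk_dropUntil _ _))⟩
  · have hyt : y ∈ (p.takeUntil x hx).support := by
      rw [← p.take_spec hx, Walk.mem_support_append_iff] at hy
      exact hy.resolve_right hxy
    refine ⟨_, ((hp.takeUntil hx).dropUntil hyt).reverse, .inr ?_⟩
    rw [Walk.reverse_reverse]
    exact (Walk.isSubwalk_dropUntil _ _).trans (Walk.isSubwalk_takeUntil _ _)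

end SimpleGraph

theorem List.Nodup.exists_isChain_ne_map_fin_two {α : Type*} [DecidableEq α] :
    ∀ {l : List α}, l.Nodup → ∃ c : α → Fin 2, (l.map c).IsChain (· ≠ ·)
  | [], _ | [_], _ => ⟨fun _ => 0, by simp⟩
  | a :: b :: l, hl => by
    obtain ⟨c, hc⟩ := (List.nodup_cons.1 hl).2.exists_isChain_ne_map_fin_two
    have hmap : (b :: l).map (Function.update c a (c b + 1)) = (b :: l).map c :=
      List.map_congr_left fun x hx =>
        Function.update_of_ne (fun h => (List.nodup_cons.1 hl).1 (by subst h; exact hx)) _ _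
    refine ⟨Function.update c a (c b + 1), ?_⟩
    rw [List.map_cons, hmap, List.map_cons, List.isChain_cons_cons, Function.update_self]
    exact ⟨by simp, by simpa using hc⟩

theorem properConnColoring_of_isChain_ne {V : Type*} {G : SimpleGraph V} {u v : V}
    {p : G.Walk u v} (hp : p.IsPath) (hall : ∀ w, w ∈ p.support) {k : ℕ}
    {c : Sym2 V → Fin k} (hc : (p.edges.map c).IsChain (· ≠ ·)) : ProperConnColoring G c := by
  intro x y
  obtain ⟨q, hq, hsub | hsub⟩ := hp.exists_isPath_isSubwalk (hall x) (hall y)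
  · exact ⟨q, hq, hc.infix (hsub.edges_isInfix.map c)⟩
  · have := hc.infix (hsub.edges_isInfix.map c)
    rw [Walk.edges_reverse, List.map_reverse, List.isChain_reverse] at this
    exact ⟨q, hq, this.imp fun _ _ => Ne.symm⟩

theorem ProperConnColoring.two_le {V : Type*} {G : SimpleGraph V} {k : ℕ} {c : Sym2 V → Fin k}
    (hc : ProperConnColoring G c) (hG : G ≠ ⊤) : 2 ≤ k := by
  obtain ⟨x, y, hxy, hadj⟩ := ne_top_iff_exists_not_adj.1 hG
  obtain ⟨p, -, hp⟩ := hc x y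
  rcases p with _ | ⟨h, _ | ⟨h', q⟩⟩
  · exact (hxy rfl).elim
  · exact (hadj h).elim
  · simp only [Walk.edges_cons, List.map_cons] at hp
    exact Fin.nontrivial_iff_two_le.1 (nontrivial_of_ne _ _ (List.isChain_cons_cons.1 hp).1)

theorem pc_eq_two_of_isHamiltonian {V : Type*} [DecidableEq V] {G : SimpleGraph V} {u v : V}
    {p : G.Walk u v} (hp : p.IsHamiltonian) (hG : G ≠ ⊤) : pc G = 2 := by
  obtain ⟨c, hc⟩ := hp.isPath.isTrail.edges_nodup.exists_isChain_ne_map_fin_two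
  have h2 : 2 ∈ {k | ∃ c : Sym2 V → Fin k, ProperConnColoring G c} :=
    ⟨c, properConnColoring_of_isChain_ne hp.isPath hp.mem_support hc⟩
  exact le_antisymm (Nat.sInf_le h2) (le_csInf ⟨2, h2⟩ fun k ⟨c, hc⟩ => hc.two_le hG)

/-- A connected noncomplete graph on 5 vertices with `d(x) + d(y) ≥ 3` for all
nonadjacent `x ≠ y` has a Hamiltonian path, and hence `pc(G) = 2`. -/
theorem hamPath_and_pc_of_order_five {V : Type*} [Fintype V] [DecidableEq V]
    (G : SimpleGraph V) [DecidableRel G.Adj]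
    (hG : G.Connected) (hnc : G ≠ ⊤) (hn : Fintype.card V = 5)
    (hdeg : ∀ x y : V, x ≠ y → ¬ G.Adj x y → 3 ≤ G.degree x + G.degree y) :
    (∃ (u v : V) (p : G.Walk u v), p.IsHamiltonian ∧ p.IsPath) ∧ pc G = 2 := by
  obtain ⟨l, hl⟩ := G.exists_isLongestPathList
  have hall : ∀ v, v ∈ l := hl.mem_of_card_eq_five hG.preconnected hn hdeg
  have : Nonempty V := Fintype.card_pos_iff.1 (by omega)
  have hne : l ≠ [] := List.ne_nil_of_mem (hall (Classical.arbitrary V))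
  have hp := hl.1.isHamiltonian_ofSupport hne hall
  exact ⟨⟨_, _, _, hp, hp.isPath⟩, pc_eq_two_of_isHamiltonian hp hnc⟩
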